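/- arXiv:2109.07033 — 11 statements merged into one kernel-verified Lean document; each statement's English description precedes it below -/
import Mathlib

section
/- Let u be a smooth solution of the homogeneous Euler–Bernoulli beam equation μ(x) ∂ₜ²u = −∂ₓ²(D(x) ∂ₓ²u) on [a,b] × [0,∞) (i.e. with f = 0). Assume that at each endpoint c ∈ {a, b} the following two boundary conditions hold for all t ≥ 0: (i) u(c,t) = 0 for all t, or ∂ₓ(D ∂ₓ²u)(c,t) = 0 for all t; and (ii) ∂ₓu(c,t) = 0 for all t, or D(c) ∂ₓ²u(c,t) = 0 for all t. (This covers the simply supported, free, clamped, and sliding boundary conditions.) Then the energy is conserved: E(t) = E(0) for all t ≥ 0. -/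
open Set MeasureTheory intervalIntegral

noncomputable def pd1 (f : ℝ × ℝ → ℝ) (p : ℝ × ℝ) : ℝ := fderiv ℝ f p (1, 0)
noncomputable def pd2 (f : ℝ × ℝ → ℝ) (p : ℝ × ℝ) : ℝ := fderiv ℝ f p (0, 1)

lemma contDiff_pd1 {f : ℝ × ℝ → ℝ} (hf : ContDiff ℝ (⊤ : ℕ∞) f) : ContDiff ℝ (⊤ : ℕ∞) (pd1 f) :=
  (hf.fderiv_right (m := (⊤ : ℕ∞)) (by simp)).clm_apply contDiff_const

lemma contDiff_pd2 {f : ℝ × ℝ → ℝ} (hf : ContDiff ℝ (⊤ : ℕ∞) f) : ContDiff ℝ (⊤ : ℕ∞) (pd2 f) :=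
  (hf.fderiv_right (m := (⊤ : ℕ∞)) (by simp)).clm_apply contDiff_const

lemma hasDerivAt_slice1 {f : ℝ × ℝ → ℝ} (hf : ContDiff ℝ (⊤ : ℕ∞) f) (x t : ℝ) :
    HasDerivAt (fun y => f (y, t)) (pd1 f (x, t)) x := by
  have h1 : HasFDerivAt f (fderiv ℝ f (x, t)) (x, t) :=
    (hf.differentiable (by simp) (x, t)).hasFDerivAt
  have h2 : HasDerivAt (fun y : ℝ => (y, t)) ((1 : ℝ), (0 : ℝ)) x :=
    HasDerivAt.prodMk (hasDerivAt_id x) (hasDerivAt_const x t)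
  exact h1.comp_hasDerivAt x h2

lemma hasDerivAt_slice2 {f : ℝ × ℝ → ℝ} (hf : ContDiff ℝ (⊤ : ℕ∞) f) (x t : ℝ) :
    HasDerivAt (fun τ => f (x, τ)) (pd2 f (x, t)) t := by
  have h1 : HasFDerivAt f (fderiv ℝ f (x, t)) (x, t) :=
    (hf.differentiable (by simp) (x, t)).hasFDerivAt
  have h2 : HasDerivAt (fun τ : ℝ => (x, τ)) ((0 : ℝ), (1 : ℝ)) t :=
    HasDerivAt.prodMk (hasDerivAt_const t x) (hasDerivAt_id t)
  exact h1.comp_hasDerivAt t h2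

lemma pd_comm {f : ℝ × ℝ → ℝ} (hf : ContDiff ℝ (⊤ : ℕ∞) f) (p : ℝ × ℝ) :
    pd2 (pd1 f) p = pd1 (pd2 f) p := by
  have hd : ∀ q, HasFDerivAt f (fderiv ℝ f q) q := fun q =>
    (hf.differentiable (by simp) q).hasFDerivAt
  have hd2 : HasFDerivAt (fderiv ℝ f) (fderiv ℝ (fderiv ℝ f) p) p :=
    (((hf.fderiv_right (m := (⊤ : ℕ∞)) (by simp)).differentiable (by simp)) p).hasFDerivAt
  have sym := second_derivative_symmetric hd hd2
  have e1 : HasFDerivAt (fun q => fderiv ℝ f q ((1 : ℝ), (0 : ℝ)))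
      ((ContinuousLinearMap.apply ℝ ℝ ((1 : ℝ), (0 : ℝ))).comp (fderiv ℝ (fderiv ℝ f) p)) p :=
    (ContinuousLinearMap.apply ℝ ℝ ((1 : ℝ), (0 : ℝ))).hasFDerivAt.comp p hd2
  have e2 : HasFDerivAt (fun q => fderiv ℝ f q ((0 : ℝ), (1 : ℝ)))
      ((ContinuousLinearMap.apply ℝ ℝ ((0 : ℝ), (1 : ℝ))).comp (fderiv ℝ (fderiv ℝ f) p)) p :=
    (ContinuousLinearMap.apply ℝ ℝ ((0 : ℝ), (1 : ℝ))).hasFDerivAt.comp p hd2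
  have u1 : pd1 f = fun q => fderiv ℝ f q ((1 : ℝ), (0 : ℝ)) := rfl
  have u2 : pd2 f = fun q => fderiv ℝ f q ((0 : ℝ), (1 : ℝ)) := rfl
  have h1 : pd2 (pd1 f) p = fderiv ℝ (fderiv ℝ f) p ((0 : ℝ), (1 : ℝ)) ((1 : ℝ), (0 : ℝ)) := by
    simp only [pd2, u1, e1.fderiv]; rfl
  have h2 : pd1 (pd2 f) p = fderiv ℝ (fderiv ℝ f) p ((1 : ℝ), (0 : ℝ)) ((0 : ℝ), (1 : ℝ)) := by
    simp only [pd1, u2, e2.fderiv]; rfl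
  rw [h1, h2, sym]

lemma zero_on_pos {w : ℝ → ℝ} (hw : Continuous w) (h : ∀ t, 0 < t → w t = 0) :
    ∀ t, 0 ≤ t → w t = 0 := by
  intro t ht
  rcases ht.lt_or_eq with h' | h'
  · exact h t h'
  · have h1 : Filter.Tendsto w (nhdsWithin 0 (Set.Ioi 0)) (nhds (w 0)) :=
      (hw.continuousAt.tendsto).mono_left nhdsWithin_le_nhds
    have h2 : Filter.Tendsto w (nhdsWithin 0 (Set.Ioi 0)) (nhds 0) := by
      have : ∀ᶠ s in nhdsWithin (0 : ℝ) (Set.Ioi 0), w s = 0 :=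
        eventually_nhdsWithin_of_forall fun s hs => h s hs
      exact Filter.Tendsto.congr' (Filter.EventuallyEq.symm this) tendsto_const_nhds
    rw [← h']
    exact tendsto_nhds_unique h1 h2

lemma slice_deriv_zero {f : ℝ × ℝ → ℝ} (hf : ContDiff ℝ (⊤ : ℕ∞) f) (c : ℝ)
    (h : ∀ t, 0 ≤ t → f (c, t) = 0) : ∀ t, 0 ≤ t → pd2 f (c, t) = 0 := by
  apply zero_on_pos (w := fun t => pd2 f (c, t))
    ((contDiff_pd2 hf).continuous.comp (continuous_const.prodMk continuous_id))
  intro t ht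
  have h1 : pd2 f (c, t) = deriv (fun τ => f (c, τ)) t := (hasDerivAt_slice2 hf c t).deriv.symm
  rw [h1]
  have hev : (fun τ => f (c, τ)) =ᶠ[nhds t] fun _ => (0 : ℝ) := by
    filter_upwards [Ioi_mem_nhds ht] with τ hτ
    exact h τ (le_of_lt hτ)
  rw [hev.deriv_eq, deriv_const]

/-- Energy conservation for the homogeneous Euler–Bernoulli beam equation with any of the
simply supported / free / clamped / sliding boundary conditions. -/
theorem euler_bernoulli_energy_conservation
    (a b : ℝ) (hab : a < b)
    (μ D : ℝ → ℝ) (hμ : ContDiff ℝ (⊤ : ℕ∞) μ) (hD : ContDiff ℝ (⊤ : ℕ∞) D)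
    (hμpos : ∀ x ∈ Set.Icc a b, 0 < μ x)
    (hDpos : ∀ x ∈ Set.Icc a b, 0 < D x)
    (u : ℝ → ℝ → ℝ) (hu : ContDiff ℝ (⊤ : ℕ∞) fun p : ℝ × ℝ => u p.1 p.2)
    (hpde : ∀ x ∈ Set.Icc a b, ∀ t : ℝ, 0 ≤ t →
      μ x * iteratedDeriv 2 (fun τ => u x τ) t
        = - iteratedDeriv 2 (fun y => D y * iteratedDeriv 2 (fun z => u z t) y) x)
    (hbc1 : ∀ c ∈ ({a, b} : Set ℝ),
      (∀ t : ℝ, 0 ≤ t → u c t = 0) ∨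
      (∀ t : ℝ, 0 ≤ t →
        deriv (fun y => D y * iteratedDeriv 2 (fun z => u z t) y) c = 0))
    (hbc2 : ∀ c ∈ ({a, b} : Set ℝ),
      (∀ t : ℝ, 0 ≤ t → deriv (fun y => u y t) c = 0) ∨
      (∀ t : ℝ, 0 ≤ t → D c * iteratedDeriv 2 (fun y => u y t) c = 0))
    (E : ℝ → ℝ)
    (hE : ∀ t : ℝ, E t = (1 / 2) * ∫ x in a..b,
        (μ x * (deriv (fun τ => u x τ) t) ^ 2
          + D x * (iteratedDeriv 2 (fun y => u y t) x) ^ 2)) :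
    ∀ t : ℝ, 0 ≤ t → E t = E 0 := by
  -- notation
  set U : ℝ × ℝ → ℝ := fun p => u p.1 p.2 with hUdef
  have hU : ContDiff ℝ (⊤ : ℕ∞) U := hu
  set Ut : ℝ × ℝ → ℝ := pd2 U with hUtdef
  set U1 : ℝ × ℝ → ℝ := pd1 U with hU1def
  set U2 : ℝ × ℝ → ℝ := pd1 U1 with hU2def
  have hUt : ContDiff ℝ (⊤ : ℕ∞) Ut := contDiff_pd2 hU
  have hU1 : ContDiff ℝ (⊤ : ℕ∞) U1 := contDiff_pd1 hU
  have hU2 : ContDiff ℝ (⊤ : ℕ∞) U2 := contDiff_pd1 hU1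
  set V : ℝ × ℝ → ℝ := fun p => D p.1 * U2 p with hVdef
  have hV : ContDiff ℝ (⊤ : ℕ∞) V := (hD.comp contDiff_fst).mul hU2
  set V1 : ℝ × ℝ → ℝ := pd1 V with hV1def
  set V2 : ℝ × ℝ → ℝ := pd1 V1 with hV2def
  have hV1 : ContDiff ℝ (⊤ : ℕ∞) V1 := contDiff_pd1 hV
  have hV2 : ContDiff ℝ (⊤ : ℕ∞) V2 := contDiff_pd1 hV1
  have hpd1Ut : ContDiff ℝ (⊤ : ℕ∞) (pd1 Ut) := contDiff_pd1 hUt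
  have hpd1pd1Ut : ContDiff ℝ (⊤ : ℕ∞) (pd1 (pd1 Ut)) := contDiff_pd1 hpd1Ut
  -- identifications of classical partial derivatives
  have id1 : ∀ x t : ℝ, deriv (fun τ => u x τ) t = Ut (x, t) := fun x t =>
    (hasDerivAt_slice2 hU x t).deriv
  have id3 : ∀ x t : ℝ, deriv (fun y => u y t) x = U1 (x, t) := fun x t =>
    (hasDerivAt_slice1 hU x t).deriv
  have id4 : ∀ x t : ℝ, iteratedDeriv 2 (fun z => u z t) x = U2 (x, t) := by
    intro x t
    rw [show (2 : ℕ) = 1 + 1 from rfl, iteratedDeriv_succ, iteratedDeriv_one]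
    have h : deriv (fun z => u z t) = fun y => U1 (y, t) := funext fun y => id3 y t
    rw [h]
    exact (hasDerivAt_slice1 hU1 x t).deriv
  have id2 : ∀ x t : ℝ, iteratedDeriv 2 (fun τ => u x τ) t = pd2 Ut (x, t) := by
    intro x t
    rw [show (2 : ℕ) = 1 + 1 from rfl, iteratedDeriv_succ, iteratedDeriv_one]
    have h : deriv (fun τ => u x τ) = fun τ => Ut (x, τ) := funext fun τ => id1 x τ
    rw [h]
    exact (hasDerivAt_slice2 hUt x t).deriv
  have idV : ∀ t : ℝ, (fun y => D y * iteratedDeriv 2 (fun z => u z t) y)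
      = fun y => V (y, t) := fun t => funext fun y => by rw [id4 y t]
  have id5 : ∀ x t : ℝ, deriv (fun y => D y * iteratedDeriv 2 (fun z => u z t) y) x
      = V1 (x, t) := by
    intro x t
    rw [idV t]
    exact (hasDerivAt_slice1 hV x t).deriv
  have id6 : ∀ x t : ℝ, iteratedDeriv 2 (fun y => D y * iteratedDeriv 2 (fun z => u z t) y) x
      = V2 (x, t) := by
    intro x t
    rw [idV t, show (2 : ℕ) = 1 + 1 from rfl, iteratedDeriv_succ, iteratedDeriv_one]
    have h : deriv (fun y => V (y, t)) = fun y => V1 (y, t) :=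
      funext fun y => (hasDerivAt_slice1 hV y t).deriv
    rw [h]
    exact (hasDerivAt_slice1 hV1 x t).deriv
  -- PDE in pd form
  have hpde' : ∀ x ∈ Set.Icc a b, ∀ t : ℝ, 0 ≤ t →
      μ x * pd2 Ut (x, t) = - V2 (x, t) := by
    intro x hx t ht
    have := hpde x hx t ht
    rwa [id2 x t, id6 x t] at this
  -- Clairaut
  have c2 : ∀ p : ℝ × ℝ, pd2 U2 p = pd1 (pd1 Ut) p := by
    intro p
    have h1 : pd2 U2 p = pd1 (pd2 U1) p := pd_comm hU1 p
    have h2 : pd2 U1 = pd1 Ut := funext fun q => pd_comm hU q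
    rw [h1, h2]
  -- integrand and its time derivative
  set Fj : ℝ × ℝ → ℝ := fun p => μ p.1 * (Ut p) ^ 2 + D p.1 * (U2 p) ^ 2 with hFjdef
  set Gj : ℝ × ℝ → ℝ := fun p =>
    2 * μ p.1 * Ut p * pd2 Ut p + 2 * D p.1 * U2 p * pd2 U2 p with hGjdef
  have hFjc : Continuous Fj :=
    (((hμ.comp contDiff_fst).mul (hUt.pow 2)).add
      ((hD.comp contDiff_fst).mul (hU2.pow 2))).continuous
  have hGjc : Continuous Gj := by
    apply Continuous.add
    · exact ((((continuous_const.mul (hμ.continuous.comp continuous_fst)).mul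
        hUt.continuous)).mul (contDiff_pd2 hUt).continuous)
    · exact ((((continuous_const.mul (hD.continuous.comp continuous_fst)).mul
        hU2.continuous)).mul (contDiff_pd2 hU2).continuous)
  -- time derivative of the slice
  have hΦdiff : ∀ x t : ℝ, HasDerivAt (fun s => Fj (x, s)) (Gj (x, t)) t := by
    intro x t
    have h1 := hasDerivAt_slice2 hUt x t
    have h2 := hasDerivAt_slice2 hU2 x t
    have h3 : HasDerivAt (fun s => μ x * Ut (x, s) ^ 2 + D x * U2 (x, s) ^ 2)
        (μ x * (2 * Ut (x, t) ^ 1 * pd2 Ut (x, t))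
          + D x * (2 * U2 (x, t) ^ 1 * pd2 U2 (x, t))) t :=
      ((h1.pow 2).const_mul (μ x)).add ((h2.pow 2).const_mul (D x))
    have h4 : μ x * (2 * Ut (x, t) ^ 1 * pd2 Ut (x, t))
          + D x * (2 * U2 (x, t) ^ 1 * pd2 U2 (x, t)) = Gj (x, t) := by
      simp only [hGjdef, pow_one]; ring
    rw [h4] at h3
    exact h3
  -- spatial antiderivative of Gj on the strip, for t ≥ 0
  set g : ℝ → ℝ → ℝ := fun t y =>
    2 * (pd1 Ut (y, t) * (D y * U2 (y, t)) - Ut (y, t) * V1 (y, t)) with hgdef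
  have hgder : ∀ t : ℝ, 0 ≤ t → ∀ x ∈ Set.Icc a b, HasDerivAt (g t) (Gj (x, t)) x := by
    intro t ht x hx
    have hA := hasDerivAt_slice1 hpd1Ut x t
    have hB : HasDerivAt (fun y => D y * U2 (y, t)) (V1 (x, t)) x := hasDerivAt_slice1 hV x t
    have hC := hasDerivAt_slice1 hUt x t
    have hD' : HasDerivAt (fun y => V1 (y, t)) (V2 (x, t)) x := hasDerivAt_slice1 hV1 x t
    have combo : HasDerivAt (g t)
        (2 * ((pd1 (pd1 Ut) (x, t) * (D x * U2 (x, t)) + pd1 Ut (x, t) * V1 (x, t))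
          - (pd1 Ut (x, t) * V1 (x, t) + Ut (x, t) * V2 (x, t)))) x :=
      ((hA.mul hB).sub (hC.mul hD')).const_mul 2
    have heq : 2 * ((pd1 (pd1 Ut) (x, t) * (D x * U2 (x, t)) + pd1 Ut (x, t) * V1 (x, t))
          - (pd1 Ut (x, t) * V1 (x, t) + Ut (x, t) * V2 (x, t))) = Gj (x, t) := by
      have hp := hpde' x hx t ht
      have hc := c2 (x, t)
      simp only [hGjdef]
      rw [hc]
      linear_combination (-2 : ℝ) * Ut (x, t) * hp
    rwa [heq] at combo
  -- boundary terms vanish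
  have hgzero : ∀ c ∈ ({a, b} : Set ℝ), ∀ t : ℝ, 0 ≤ t → g t c = 0 := by
    intro c hc t ht
    have f1 : pd1 Ut (c, t) * (D c * U2 (c, t)) = 0 := by
      rcases hbc2 c hc with h | h
      · have hz : ∀ s : ℝ, 0 ≤ s → U1 (c, s) = 0 := fun s hs => by
          rw [← id3 c s]; exact h s hs
        have : pd2 U1 (c, t) = 0 := slice_deriv_zero hU1 c hz t ht
        rw [show pd1 Ut (c, t) = pd2 U1 (c, t) from (pd_comm hU (c, t)).symm, this, zero_mul]
      · have : D c * U2 (c, t) = 0 := by rw [← id4 c t]; exact h t ht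
        rw [this, mul_zero]
    have f2 : Ut (c, t) * V1 (c, t) = 0 := by
      rcases hbc1 c hc with h | h
      · have hz : ∀ s : ℝ, 0 ≤ s → U (c, s) = 0 := fun s hs => h s hs
        have : Ut (c, t) = 0 := slice_deriv_zero hU c hz t ht
        rw [this, zero_mul]
      · have : V1 (c, t) = 0 := by rw [← id5 c t]; exact h t ht
        rw [this, mul_zero]
    simp only [hgdef, f1, f2, sub_zero, mul_zero, sub_self]
  -- the energy integral
  set GG : ℝ → ℝ := fun t => ∫ x in a..b, Fj (x, t) with hGGdef
  have hEG : ∀ t : ℝ, E t = (1 / 2) * GG t := by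
    intro t
    rw [hE t, hGGdef]
    congr 1
    apply intervalIntegral.integral_congr
    intro x _
    show μ x * (deriv (fun τ => u x τ) t) ^ 2 + D x * (iteratedDeriv 2 (fun y => u y t) x) ^ 2
      = Fj (x, t)
    rw [id1 x t, id4 x t]
  -- derivative under the integral sign
  have hGder : ∀ t₀ : ℝ, HasDerivAt GG (∫ x in a..b, Gj (x, t₀)) t₀ := by
    intro t₀
    have hcomp : IsCompact ((Set.uIcc a b) ×ˢ (Set.Icc (t₀ - 1) (t₀ + 1))) :=
      isCompact_uIcc.prod isCompact_Icc
    obtain ⟨C, hC⟩ := hcomp.exists_bound_of_continuousOn hGjc.continuousOn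
    have key := intervalIntegral.hasDerivAt_integral_of_dominated_loc_of_deriv_le
      (F := fun s x => Fj (x, s)) (F' := fun s x => Gj (x, s)) (x₀ := t₀)
      (a := a) (b := b) (μ := volume) (bound := fun _ => C) (s := Metric.ball t₀ 1) (Metric.ball_mem_nhds t₀ one_pos)
      (Filter.Eventually.of_forall fun s =>
        (hFjc.comp (continuous_id.prodMk continuous_const)).aestronglyMeasurable)
      ((hFjc.comp (continuous_id.prodMk continuous_const)).intervalIntegrable a b)
      (hGjc.comp (continuous_id.prodMk continuous_const)).aestronglyMeasurable
      ?_ intervalIntegrable_const ?_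
    · exact key.2
    · apply Filter.Eventually.of_forall
      intro x hx s hs
      have hx' : x ∈ Set.uIcc a b := Set.uIoc_subset_uIcc hx
      have hs' : s ∈ Set.Icc (t₀ - 1) (t₀ + 1) := by
        rw [Metric.mem_ball, Real.dist_eq] at hs
        constructor <;> [linarith [abs_lt.1 hs]; linarith [abs_lt.1 hs]]
      exact hC (x, s) (Set.mk_mem_prod hx' hs')
    · exact Filter.Eventually.of_forall fun x _ s _ => hΦdiff x s
  -- for t ≥ 0 the derivative vanishes
  have hE0 : ∀ t : ℝ, 0 ≤ t → HasDerivAt E 0 t := by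
    intro t ht
    have hint : (∫ x in a..b, Gj (x, t)) = g t b - g t a := by
      apply intervalIntegral.integral_eq_sub_of_hasDerivAt
      · intro x hx
        rw [Set.uIcc_of_le hab.le] at hx
        exact hgder t ht x hx
      · exact (hGjc.comp (continuous_id.prodMk continuous_const)).intervalIntegrable a b
    have hzero : (∫ x in a..b, Gj (x, t)) = 0 := by
      rw [hint, hgzero b (by simp) t ht, hgzero a (by simp) t ht, sub_zero]
    have hEfun : E = fun s => (1 / 2) * GG s := funext hEG
    rw [hEfun]
    have := (hGder t).const_mul (1 / 2 : ℝ)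
    rw [hzero, mul_zero] at this
    exact this
  -- conclude by constancy
  intro t ht
  have key := constant_of_has_deriv_right_zero (f := E) (a := 0) (b := t)
    (fun x hx => (hE0 x hx.1).continuousAt.continuousWithinAt)
    (fun x hx => (hE0 x hx.1).hasDerivWithinAt)
  exact key t (Set.mem_Icc.mpr ⟨ht, le_rfl⟩)
end

section
/- With the numerical fluxes v*, A*, p*, B* defined from the flux parameters, the interelement energy flux satisfies the identity J = −τ₁ (v⁻ − v⁺)² − β₁ (A⁻ − A⁺)² − β₂ (B⁻ − B⁺)² − τ₂ (p⁻ − p⁺)². -/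
/-- Interelement energy flux identity:
`J = −τ₁ [[v]]² − β₁ [[A]]² − β₂ [[B]]² − τ₂ [[p]]²`. -/
theorem interelement_flux_identity
    (vm vp pm pp Bm Bp Am Ap α₁ α₂ β₁ β₂ τ₁ τ₂ : ℝ) :
    let vs := α₁ * vm + (1 - α₁) * vp + β₁ * (Am - Ap)
    let As := (1 - α₁) * Am + α₁ * Ap + τ₁ * (vm - vp)
    let ps := α₂ * pm + (1 - α₂) * pp - β₂ * (Bm - Bp)
    let Bs := (1 - α₂) * Bm + α₂ * Bp - τ₂ * (pm - pp)
    let J := (Am * (vm - vs) - vm * As + Bm * (ps - pm) + pm * Bs)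
           - (Ap * (vp - vs) - vp * As + Bp * (ps - pp) + pp * Bs)
    J = -τ₁ * (vm - vp) ^ 2 - β₁ * (Am - Ap) ^ 2
        - β₂ * (Bm - Bp) ^ 2 - τ₂ * (pm - pp) ^ 2 := by
  intros vs As ps Bs J; simp only [vs, As, ps, Bs, J]; ring
end

section
/- If β₁ ≥ 0, β₂ ≥ 0, τ₁ ≥ 0, and τ₂ ≥ 0, then the interelement energy flux satisfies J ≤ 0. Moreover, if β₁, β₂, τ₁, τ₂ are all strictly positive and at least one of the jumps v⁻ − v⁺, p⁻ − p⁺, A⁻ − A⁺, B⁻ − B⁺ is nonzero, then J < 0 (the scheme is energy dissipating at the node). -/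
/-- With nonnegative dissipation parameters, the interelement energy flux satisfies `J ≤ 0`;
with strictly positive parameters and a nonzero jump, `J < 0`. -/
theorem interelement_flux_dissipative
    (vm vp pm pp Bm Bp Am Ap α₁ α₂ β₁ β₂ τ₁ τ₂ : ℝ) :
    let vs := α₁ * vm + (1 - α₁) * vp + β₁ * (Am - Ap)
    let As := (1 - α₁) * Am + α₁ * Ap + τ₁ * (vm - vp)
    let ps := α₂ * pm + (1 - α₂) * pp - β₂ * (Bm - Bp)
    let Bs := (1 - α₂) * Bm + α₂ * Bp - τ₂ * (pm - pp)
    let J := (Am * (vm - vs) - vm * As + Bm * (ps - pm) + pm * Bs)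
           - (Ap * (vp - vs) - vp * As + Bp * (ps - pp) + pp * Bs)
    (0 ≤ β₁ → 0 ≤ β₂ → 0 ≤ τ₁ → 0 ≤ τ₂ → J ≤ 0) ∧
    (0 < β₁ → 0 < β₂ → 0 < τ₁ → 0 < τ₂ →
      (vm - vp ≠ 0 ∨ pm - pp ≠ 0 ∨ Am - Ap ≠ 0 ∨ Bm - Bp ≠ 0) → J < 0) := by
  intro vs As ps Bs J
  have hJ : J = -(τ₁ * (vm - vp) ^ 2 + β₁ * (Am - Ap) ^ 2 + τ₂ * (pm - pp) ^ 2
      + β₂ * (Bm - Bp) ^ 2) := by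
    simp only [J, vs, As, ps, Bs]; ring
  have n1 := sq_nonneg (vm - vp)
  have n2 := sq_nonneg (Am - Ap)
  have n3 := sq_nonneg (pm - pp)
  have n4 := sq_nonneg (Bm - Bp)
  constructor
  · intro h1 h2 h3 h4
    rw [hJ]
    have := mul_nonneg h3 n1
    have := mul_nonneg h1 n2
    have := mul_nonneg h4 n3
    have := mul_nonneg h2 n4
    linarith
  · intro h1 h2 h3 h4 hne
    rw [hJ]
    have m1 := mul_nonneg h3.le n1
    have m2 := mul_nonneg h1.le n2
    have m3 := mul_nonneg h4.le n3
    have m4 := mul_nonneg h2.le n4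
    rcases hne with h | h | h | h
    · have := mul_pos h3 (pow_pos (abs_pos.mpr h) 2)
      rw [sq_abs] at this; linarith
    · have := mul_pos h4 (pow_pos (abs_pos.mpr h) 2)
      rw [sq_abs] at this; linarith
    · have := mul_pos h1 (pow_pos (abs_pos.mpr h) 2)
      rw [sq_abs] at this; linarith
    · have := mul_pos h2 (pow_pos (abs_pos.mpr h) 2)
      rw [sq_abs] at this; linarith
end

section
/- The contribution to the discrete energy derivative from the right physical boundary satisfies the identity A (v − v*) − v A* + B (p* − p) + p B* = −η₂ (a₂² − b₂²) ζ₂² − η₁ (a₁² − b₁²) ζ₁². In particular, if η₁ (a₁² − b₁²) ≥ 0 and η₂ (a₂² − b₂²) ≥ 0, this contribution is nonpositive. -/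
/-- Right physical boundary contribution to the discrete energy derivative:
`A (v − v*) − v A* + B (p* − p) + p B* = −η₂ (a₂² − b₂²) ζ₂² − η₁ (a₁² − b₁²) ζ₁²`,
which is nonpositive when `η₁ (a₁² − b₁²) ≥ 0` and `η₂ (a₂² − b₂²) ≥ 0`. -/
theorem right_boundary_energy_contribution
    (v p B A a₁ b₁ a₂ b₂ η₁ η₂ : ℝ)
    (h₁ : (a₁ = 1 ∧ b₁ = 0) ∨ (a₁ = 0 ∧ b₁ = 1))
    (h₂ : (a₂ = 1 ∧ b₂ = 0) ∨ (a₂ = 0 ∧ b₂ = 1)) :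
    let ζ₁ := a₁ * p + b₁ * B
    let ζ₂ := a₂ * v - b₂ * A
    let ps := p - (a₁ - η₁ * b₁) * ζ₁
    let Bs := B - (b₁ + η₁ * a₁) * ζ₁
    let vs := v - (a₂ - η₂ * b₂) * ζ₂
    let As := A + (b₂ + η₂ * a₂) * ζ₂
    (A * (v - vs) - v * As + B * (ps - p) + p * Bs
        = -η₂ * (a₂ ^ 2 - b₂ ^ 2) * ζ₂ ^ 2 - η₁ * (a₁ ^ 2 - b₁ ^ 2) * ζ₁ ^ 2) ∧
    (0 ≤ η₁ * (a₁ ^ 2 - b₁ ^ 2) → 0 ≤ η₂ * (a₂ ^ 2 - b₂ ^ 2) →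
      A * (v - vs) - v * As + B * (ps - p) + p * Bs ≤ 0) := by
  intro ζ₁ ζ₂ ps Bs vs As
  have heq : A * (v - vs) - v * As + B * (ps - p) + p * Bs
      = -η₂ * (a₂ ^ 2 - b₂ ^ 2) * ζ₂ ^ 2 - η₁ * (a₁ ^ 2 - b₁ ^ 2) * ζ₁ ^ 2 := by
    rcases h₁ with ⟨ha, hb⟩ | ⟨ha, hb⟩ <;> rcases h₂ with ⟨hc, hd⟩ | ⟨hc, hd⟩ <;>
      simp only [ζ₁, ζ₂, ps, Bs, vs, As, ha, hb, hc, hd] <;> ring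
  refine ⟨heq, fun h1 h2 => ?_⟩
  rw [heq]
  have := mul_nonneg h1 (sq_nonneg ζ₁)
  have := mul_nonneg h2 (sq_nonneg ζ₂)
  nlinarith
end

section
/- The contribution to the discrete energy derivative from the left physical boundary satisfies the identity −( A (v − v*) − v A* + B (p* − p) + p B* ) = −η₂ (a₂² − b₂²) ζ₂² − η₁ (a₁² − b₁²) ζ₁². In particular, if η₁ (a₁² − b₁²) ≥ 0 and η₂ (a₂² − b₂²) ≥ 0, this contribution is nonpositive. -/
/-- Left physical boundary contribution to the discrete energy derivative:
`−(A (v − v*) − v A* + B (p* − p) + p B*) = −η₂ (a₂² − b₂²) ζ₂² − η₁ (a₁² − b₁²) ζ₁²`,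
which is nonpositive when `η₁ (a₁² − b₁²) ≥ 0` and `η₂ (a₂² − b₂²) ≥ 0`. -/
theorem left_boundary_energy_contribution
    (v p B A a₁ b₁ a₂ b₂ η₁ η₂ : ℝ)
    (h₁ : (a₁ = 1 ∧ b₁ = 0) ∨ (a₁ = 0 ∧ b₁ = 1))
    (h₂ : (a₂ = 1 ∧ b₂ = 0) ∨ (a₂ = 0 ∧ b₂ = 1)) :
    let ζ₁ := -a₁ * p + b₁ * B
    let ζ₂ := a₂ * v + b₂ * A
    let ps := p + (a₁ - η₁ * b₁) * ζ₁
    let Bs := B - (b₁ + η₁ * a₁) * ζ₁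
    let vs := v - (a₂ - η₂ * b₂) * ζ₂
    let As := A - (b₂ + η₂ * a₂) * ζ₂
    (-(A * (v - vs) - v * As + B * (ps - p) + p * Bs)
        = -η₂ * (a₂ ^ 2 - b₂ ^ 2) * ζ₂ ^ 2 - η₁ * (a₁ ^ 2 - b₁ ^ 2) * ζ₁ ^ 2) ∧
    (0 ≤ η₁ * (a₁ ^ 2 - b₁ ^ 2) → 0 ≤ η₂ * (a₂ ^ 2 - b₂ ^ 2) →
      -(A * (v - vs) - v * As + B * (ps - p) + p * Bs) ≤ 0) := by
  intro ζ₁ ζ₂ ps Bs vs As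
  have key : -(A * (v - vs) - v * As + B * (ps - p) + p * Bs)
      = -η₂ * (a₂ ^ 2 - b₂ ^ 2) * ζ₂ ^ 2 - η₁ * (a₁ ^ 2 - b₁ ^ 2) * ζ₁ ^ 2 := by
    simp only [ζ₁, ζ₂, ps, Bs, vs, As]
    rcases h₁ with ⟨rfl, rfl⟩ | ⟨rfl, rfl⟩ <;> rcases h₂ with ⟨rfl, rfl⟩ | ⟨rfl, rfl⟩ <;> ring
  refine ⟨key, fun hη₁ hη₂ => ?_⟩
  rw [key]
  have := mul_nonneg hη₁ (sq_nonneg ζ₁)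
  have := mul_nonneg hη₂ (sq_nonneg ζ₂)
  nlinarith
end

section
/- Let a < b, let D : ℝ → ℝ be continuous with D(x) > 0 for all x ∈ [a,b], and let q be a natural number. If w is a real polynomial with deg w ≤ q satisfying ∫ₐᵇ D(x) (w''(x))² dx = 0, ∫ₐᵇ w'(x) dx = 0, and ∫ₐᵇ w(x) dx = 0, then w = 0. (This is the injectivity underlying the unique solvability of the local time-derivative system in the energy-based DG scheme.) -/
/-- Injectivity underlying the unique solvability of the local time-derivative system:
a polynomial `w` of degree at most `q` with vanishing weighted `H²`-seminorm,
zero mean slope and zero mean must vanish. -/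
theorem local_system_injective
    (a b : ℝ) (hab : a < b)
    (D : ℝ → ℝ) (hD : Continuous D) (hDpos : ∀ x ∈ Set.Icc a b, 0 < D x)
    (q : ℕ) (w : Polynomial ℝ) (hdeg : w.degree ≤ (q : ℕ))
    (h2 : ∫ x in a..b,
        D x * ((Polynomial.derivative (Polynomial.derivative w)).eval x) ^ 2 = 0)
    (h1 : ∫ x in a..b, (Polynomial.derivative w).eval x = 0)
    (h0 : ∫ x in a..b, w.eval x = 0) :
    w = 0 := by
  set w2 := Polynomial.derivative (Polynomial.derivative w) with hw2
  have hcont : Continuous fun x => D x * (w2.eval x) ^ 2 :=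
    hD.mul ((w2.continuous_aeval).pow 2)
  -- the integrand vanishes a.e. on Ioc a b
  have hnonneg : 0 ≤ᵐ[MeasureTheory.volume.restrict (Set.Ioc a b)]
      fun x => D x * (w2.eval x) ^ 2 := by
    filter_upwards [MeasureTheory.ae_restrict_mem measurableSet_Ioc] with x hx
    exact mul_nonneg (hDpos x (Set.Ioc_subset_Icc_self hx)).le (sq_nonneg _)
  have hint : IntervalIntegrable (fun x => D x * (w2.eval x) ^ 2)
      MeasureTheory.volume a b := hcont.intervalIntegrable a b
  have hae := (intervalIntegral.integral_eq_zero_iff_of_le_of_nonneg_ae hab.le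
      hnonneg hint).mp h2
  have heq : Set.EqOn (fun x => D x * (w2.eval x) ^ 2) 0 (Set.Ioc a b) :=
    MeasureTheory.Measure.eqOn_Ioc_of_ae_eq MeasureTheory.volume hae
      hcont.continuousOn continuousOn_const
  -- hence w'' vanishes on Ioc a b, so w'' = 0 as a polynomial
  have hroots : ∀ x ∈ Set.Ioc a b, w2.eval x = 0 := by
    intro x hx
    have h := heq hx
    simp only [Pi.zero_apply] at h
    have hDx := hDpos x (Set.Ioc_subset_Icc_self hx)
    have := (mul_eq_zero.mp h).resolve_left hDx.ne'
    exact pow_eq_zero_iff (by norm_num) |>.mp this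
  have hw2zero : w2 = 0 :=
    w2.eq_zero_of_infinite_isRoot ((Set.Ioc_infinite hab).mono fun x hx => hroots x hx)
  -- so derivative w is a constant
  have hd1 : Polynomial.derivative (Polynomial.derivative w) = 0 := hw2zero
  obtain ⟨c, hc⟩ := Polynomial.natDegree_eq_zero.mp
    (Polynomial.natDegree_eq_zero_of_derivative_eq_zero hd1)
  rw [← hc] at h1
  simp [intervalIntegral.integral_const] at h1
  have hc0 : c = 0 := by
    rcases h1 with h | h
    · linarith
    · exact h
  have hd0 : Polynomial.derivative w = 0 := by rw [← hc, hc0]; simp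
  obtain ⟨d, hdw⟩ := Polynomial.natDegree_eq_zero.mp
    (Polynomial.natDegree_eq_zero_of_derivative_eq_zero hd0)
  rw [← hdw] at h0
  simp [intervalIntegral.integral_const] at h0
  have hd0' : d = 0 := by
    rcases h0 with h | h
    · linarith
    · exact h
  rw [← hdw, hd0']; simp
end

section
/- Let m be a natural number with m ≥ 2, and let r be a real polynomial with deg r ≤ m such that ∫₀¹ xᵏ r(x) dx = 0 for every natural number k with k ≤ m − 2, and r(0) = 0 and r'(0) = 0. Then r = 0. (This is the uniqueness of the auxiliary velocity projection in Lemma 2 for the alternating flux.) -/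
open Polynomial MeasureTheory intervalIntegral Set

/-- Uniqueness of the auxiliary velocity projection in Lemma 2 (alternating flux):
a polynomial `r` of degree at most `m` orthogonal to `x^k` for `k ≤ m − 2` on `[0,1]`,
with `r(0) = 0` and `r'(0) = 0`, must vanish. -/
theorem velocity_projection_unique
    (m : ℕ) (hm : 2 ≤ m) (r : Polynomial ℝ) (hdeg : r.degree ≤ (m : ℕ))
    (horth : ∀ k : ℕ, k ≤ m - 2 → ∫ x in (0:ℝ)..1, x ^ k * r.eval x = 0)
    (h0 : r.eval 0 = 0)
    (h1 : (Polynomial.derivative r).eval 0 = 0) :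
    r = 0 := by
  -- X^2 divides r
  have hc0 : r.coeff 0 = 0 := by rwa [Polynomial.coeff_zero_eq_eval_zero]
  have hc1 : r.coeff 1 = 0 := by
    have h := Polynomial.coeff_zero_eq_eval_zero (Polynomial.derivative r)
    rw [h1, Polynomial.coeff_derivative] at h
    simpa using h
  obtain ⟨q, hq⟩ : (Polynomial.X : ℝ[X]) ^ 2 ∣ r := by
    rw [Polynomial.X_pow_dvd_iff]
    intro d hd
    interval_cases d
    · exact hc0
    · exact hc1
  by_cases hq0 : q = 0
  · simp [hq, hq0]
  exfalso
  -- degree bound on q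
  have hr0 : r ≠ 0 := by
    simp only [hq]
    exact mul_ne_zero (pow_ne_zero _ Polynomial.X_ne_zero) hq0
  have hnd : q.natDegree ≤ m - 2 := by
    have h1 : r.natDegree ≤ m := Polynomial.natDegree_le_iff_degree_le.mpr hdeg
    have h2 : r.natDegree = 2 + q.natDegree := by
      rw [hq, Polynomial.natDegree_mul (pow_ne_zero _ Polynomial.X_ne_zero) hq0,
        Polynomial.natDegree_pow, Polynomial.natDegree_X]
    omega
  -- key integral
  have hint : (∫ x in (0:ℝ)..1, q.eval x * r.eval x) = 0 := by
    have : ∀ x : ℝ, q.eval x * r.eval x =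
        ∑ j ∈ Finset.range (q.natDegree + 1), q.coeff j * (x ^ j * r.eval x) := by
      intro x
      rw [Polynomial.eval_eq_sum_range, Finset.sum_mul]
      exact Finset.sum_congr rfl fun j _ => by ring
    simp_rw [this]
    rw [intervalIntegral.integral_finset_sum]
    · refine Finset.sum_eq_zero fun j hj => ?_
      rw [intervalIntegral.integral_const_mul, horth j (by
        have := Finset.mem_range.mp hj; omega)]
      ring
    · intro j _
      exact ((continuous_const.mul ((continuous_pow j).mul
        r.continuous)) : Continuous _).intervalIntegrable _ _
  -- rewrite as integral of a square
  have hsq : (∫ x in (0:ℝ)..1, (x * q.eval x) ^ 2) = 0 := by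
    rw [← hint]
    congr 1
    ext x
    rw [hq]
    simp
    ring
  -- positivity
  have hpos : 0 < ∫ x in (0:ℝ)..1, (x * q.eval x) ^ 2 := by
    set f : ℝ → ℝ := fun x => (x * q.eval x) ^ 2 with hf
    have hcont : Continuous f := ((continuous_id.mul q.continuous).pow 2)
    have hnonneg : (0:ℝ → ℝ) ≤ᵐ[volume] f := Filter.Eventually.of_forall fun x => sq_nonneg _
    rw [intervalIntegral.integral_pos_iff_support_of_nonneg_ae hnonneg
      (hcont.intervalIntegrable _ _)]
    refine ⟨one_pos, ?_⟩
    have hXq : (Polynomial.X * q : ℝ[X]) ≠ 0 := mul_ne_zero Polynomial.X_ne_zero hq0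
    have hroots : Set.Finite {x : ℝ | (Polynomial.X * q).IsRoot x} :=
      Polynomial.finite_setOf_isRoot hXq
    have hsub : Ioc (0:ℝ) 1 \ {x : ℝ | (Polynomial.X * q).IsRoot x} ⊆
        Function.support f ∩ Ioc 0 1 := by
      rintro x ⟨hx1, hx2⟩
      refine ⟨?_, hx1⟩
      simp only [Function.mem_support, hf]
      intro hc
      apply hx2
      have : x * q.eval x = 0 := by
        have := sq_eq_zero_iff.mp hc
        exact this
      simpa [Polynomial.IsRoot] using this
    have h0' : volume ({x : ℝ | (Polynomial.X * q).IsRoot x}) = 0 :=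
      hroots.measure_zero _
    calc (0:ENNReal) < volume (Ioc (0:ℝ) 1 \ {x : ℝ | (Polynomial.X * q).IsRoot x}) := by
          rw [measure_diff_null h0']
          simp
        _ ≤ volume (Function.support f ∩ Ioc 0 1) := measure_mono hsub
  rw [hsq] at hpos
  exact lt_irrefl 0 hpos
end

section
/- Let q be a natural number with q ≥ 4, and let p be a real polynomial with deg p ≤ q such that ∫₀¹ xᵏ p''(x) dx = 0 for every natural number k with k ≤ q − 4, p''(1) = 0, p'''(1) = 0, ∫₀¹ p'(x) dx = 0, and ∫₀¹ p(x) dx = 0. Then p = 0. (This is the uniqueness of the displacement projection in Case I of Lemma 2 for the alternating flux.) -/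
open Polynomial MeasureTheory Set

/-- Uniqueness of the displacement projection in Case I (`q ≥ 4`) of Lemma 2
for the alternating flux. -/
theorem displacement_projection_unique
    (q : ℕ) (hq : 4 ≤ q) (p : Polynomial ℝ) (hdeg : p.degree ≤ (q : ℕ))
    (horth : ∀ k : ℕ, k ≤ q - 4 →
      ∫ x in (0:ℝ)..1,
        x ^ k * (Polynomial.derivative (Polynomial.derivative p)).eval x = 0)
    (h2 : (Polynomial.derivative (Polynomial.derivative p)).eval 1 = 0)
    (h3 : (Polynomial.derivative (Polynomial.derivative (Polynomial.derivative p))).eval 1 = 0)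
    (h1 : ∫ x in (0:ℝ)..1, (Polynomial.derivative p).eval x = 0)
    (h0 : ∫ x in (0:ℝ)..1, p.eval x = 0) :
    p = 0 := by
  classical
  set r : Polynomial ℝ := derivative (derivative p) with hrdef
  -- factor out (X - 1)
  obtain ⟨a, ha⟩ := (dvd_iff_isRoot (p := r) (a := 1)).mpr h2
  have ha1 : a.eval 1 = 0 := by
    have hdr : (derivative r).eval 1 = a.eval 1 := by
      rw [ha, derivative_mul]
      simp
    rw [h3] at hdr
    exact hdr.symm
  obtain ⟨b, hb⟩ := (dvd_iff_isRoot (p := a) (a := 1)).mpr ha1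
  have hrb : r = (X - C 1) ^ 2 * b := by rw [ha, hb]; ring
  have hr0 : r = 0 := by
    rcases eq_or_ne b 0 with hb0 | hbne
    · rw [hrb, hb0, mul_zero]
    · exfalso
      have hnp : p.natDegree ≤ q := natDegree_le_iff_degree_le.mpr hdeg
      have hd1 : (derivative p).natDegree ≤ p.natDegree - 1 := natDegree_derivative_le p
      have hd2 : r.natDegree ≤ (derivative p).natDegree - 1 :=
        natDegree_derivative_le (derivative p)
      have hXb : (X - C (1:ℝ)) ≠ 0 := X_sub_C_ne_zero 1
      have hnb : b.natDegree ≤ q - 4 := by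
        have hnd : r.natDegree = 2 + b.natDegree := by
          rw [hrb, natDegree_mul (pow_ne_zero 2 hXb) hbne, natDegree_pow, natDegree_X_sub_C]
        omega
      -- ∫ b·r = 0 from orthogonality
      have key : (∫ x in (0:ℝ)..1, b.eval x * r.eval x) = 0 := by
        have hsum : ∀ x : ℝ, b.eval x * r.eval x =
            ∑ k ∈ Finset.range (b.natDegree + 1), b.coeff k * (x ^ k * r.eval x) := by
          intro x
          rw [eval_eq_sum_range, Finset.sum_mul]
          exact Finset.sum_congr rfl fun k _ => by ring
        simp_rw [hsum]
        rw [intervalIntegral.integral_finset_sum]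
        · refine Finset.sum_eq_zero fun k hk => ?_
          rw [intervalIntegral.integral_const_mul,
            horth k (by have := Finset.mem_range.mp hk; omega), mul_zero]
        · intro k _
          exact (continuous_const.mul
            ((continuous_pow k).mul r.continuous)).intervalIntegrable 0 1
      -- rewrite as integral of a square
      set g : Polynomial ℝ := (X - C 1) * b with hgdef
      have hgne : g ≠ 0 := mul_ne_zero hXb hbne
      have key2 : (∫ x in (0:ℝ)..1, (g.eval x) ^ 2) = 0 := by
        rw [← key]
        congr 1
        funext x
        rw [hrb]
        simp only [hgdef, eval_mul, eval_pow, eval_sub, eval_X, eval_C]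
        ring
      have hpos : 0 < ∫ x in (0:ℝ)..1, (g.eval x) ^ 2 := by
        rw [intervalIntegral.integral_pos_iff_support_of_nonneg_ae
          (Filter.Eventually.of_forall fun x => sq_nonneg _)
          ((g.continuous.pow 2).intervalIntegrable 0 1)]
        refine ⟨one_pos, ?_⟩
        have hroots : {x : ℝ | g.IsRoot x}.Finite := finite_setOf_isRoot hgne
        have hsub : Ioc (0:ℝ) 1 \ {x : ℝ | g.IsRoot x} ⊆
            Function.support (fun x => (g.eval x) ^ 2) ∩ Ioc 0 1 := by
          intro x hx
          refine ⟨?_, hx.1⟩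
          simp only [Function.mem_support]
          exact pow_ne_zero 2 hx.2
        calc (0:ENNReal) < 1 := by norm_num
          _ = volume (Ioc (0:ℝ) 1 \ {x : ℝ | g.IsRoot x}) := by
              rw [measure_diff_null (hroots.measure_zero _)]
              simp
          _ ≤ _ := measure_mono hsub
      rw [key2] at hpos
      exact lt_irrefl 0 hpos
  -- now r = 0, so p is linear; use h1, h0
  have hr0' : derivative (derivative p) = 0 := by rw [← hrdef]; exact hr0
  have hdp0 : (derivative p).natDegree = 0 := natDegree_eq_zero_of_derivative_eq_zero hr0'
  have hdpC : derivative p = C ((derivative p).coeff 0) := eq_C_of_natDegree_eq_zero hdp0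
  have hc1 : (derivative p).coeff 0 = 0 := by
    rw [hdpC] at h1
    simpa using h1
  have hdp : derivative p = 0 := by rw [hdpC, hc1, map_zero]
  have hp0 : p.natDegree = 0 := natDegree_eq_zero_of_derivative_eq_zero hdp
  have hpC : p = C (p.coeff 0) := eq_C_of_natDegree_eq_zero hp0
  have hc0 : p.coeff 0 = 0 := by
    rw [hpC] at h0
    simpa using h0
  rw [hpC, hc0, map_zero]
end

section
/- Let p be a real polynomial with deg p ≤ 3 and r a real polynomial with deg r ≤ 1 such that r(0) = 0, r'(0) = 0, p'''(1) = 0, p''(1) = 0, ∫₀¹ p'(x) dx = 0, and ∫₀¹ p(x) dx = 0. Then p = 0 and r = 0. (This is the uniqueness of the projection pair in Case II (q = 3) of Lemma 2 for the alternating flux.) -/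
/-!
The conditions at `x = 1` say that the linear polynomial `p''` vanishes there to second order,
so `p'' = 0`. Then `p'` is a constant equal to its mean `∫₀¹ p'`, hence `0`, and likewise `p` is
a constant equal to `∫₀¹ p = 0`. The same second-order vanishing argument at `0` kills `r`.
-/

open Polynomial

lemma Polynomial.eq_zero_of_degree_le_one_of_eval_eq_zero_of_eval_derivative_eq_zero
    {R : Type*} [CommRing R] {q : R[X]} (hq : q.degree ≤ 1) {a : R}
    (h0 : q.eval a = 0) (h1 : (derivative q).eval a = 0) : q = 0 := by
  rw [eq_X_add_C_of_degree_le_one hq] at h0 h1 ⊢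
  simp only [derivative_add, derivative_C_mul_X, derivative_C, add_zero, eval_C] at h1
  simp only [h1, eval_add, eval_mul, eval_C, eval_X, zero_mul, zero_add] at h0
  simp [h0, h1]

lemma Polynomial.eq_zero_of_derivative_eq_zero_of_intervalIntegral_eq_zero
    {q : ℝ[X]} {a b : ℝ} (hab : a ≠ b) (hq : derivative q = 0)
    (h : ∫ x in a..b, q.eval x = 0) : q = 0 := by
  rw [eq_C_of_derivative_eq_zero hq] at h ⊢
  simp only [eval_C, intervalIntegral.integral_const, smul_eq_mul, mul_eq_zero,
    sub_eq_zero, hab.symm, false_or] at h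
  simp [h]

lemma Polynomial.degree_derivative_derivative_le_one_of_degree_le_three
    {R : Type*} [CommRing R] {p : R[X]} (hp : p.degree ≤ 3) :
    (derivative (derivative p)).degree ≤ 1 := by
  have h2 := natDegree_iterate_derivative p 2
  have h3 := natDegree_le_of_degree_le (n := 3) hp
  simp only [Function.iterate_succ_apply, Function.iterate_zero_apply] at h2
  exact degree_le_of_natDegree_le (n := 1) (by omega)

/-- Uniqueness of the projection pair in Case II (`q = 3`) of Lemma 2
for the alternating flux. -/
theorem projection_pair_unique_q3
    (p r : Polynomial ℝ) (hpdeg : p.degree ≤ 3) (hrdeg : r.degree ≤ 1)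
    (hr0 : r.eval 0 = 0)
    (hr1 : (Polynomial.derivative r).eval 0 = 0)
    (hp3 : (Polynomial.derivative (Polynomial.derivative (Polynomial.derivative p))).eval 1 = 0)
    (hp2 : (Polynomial.derivative (Polynomial.derivative p)).eval 1 = 0)
    (hp1 : ∫ x in (0:ℝ)..1, (Polynomial.derivative p).eval x = 0)
    (hp0 : ∫ x in (0:ℝ)..1, p.eval x = 0) :
    p = 0 ∧ r = 0 := by
  have hp'' : derivative (derivative p) = 0 :=
    eq_zero_of_degree_le_one_of_eval_eq_zero_of_eval_derivative_eq_zero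
      (degree_derivative_derivative_le_one_of_degree_le_three hpdeg) hp2 hp3
  have hp' : derivative p = 0 :=
    eq_zero_of_derivative_eq_zero_of_intervalIntegral_eq_zero zero_ne_one hp'' hp1
  exact ⟨eq_zero_of_derivative_eq_zero_of_intervalIntegral_eq_zero zero_ne_one hp' hp0,
    eq_zero_of_degree_le_one_of_eval_eq_zero_of_eval_derivative_eq_zero hrdeg hr0 hr1⟩
end

section
/- Suppose the flux parameters satisfy α₁ (1 − α₁) = β₁ τ₁. Then for all real traces v⁻, v⁺, A⁻, A⁺ the following two identities hold: (α₁ + τ₁) v* + (1 − α₁ + β₁) A* = (α₁ + τ₁) v⁻ + (1 − α₁ + β₁) A⁻, and (1 − α₁ + τ₁) v* − (α₁ + β₁) A* = (1 − α₁ + τ₁) v⁺ − (α₁ + β₁) A⁺. (These identities show that, under the condition α₁(1−α₁) = β₁τ₁, the vanishing of the node fluxes v* and A* is equivalent to the decoupled single-element boundary equations used in the optimal convergence proof.) -/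
/-- Under `α₁ (1 − α₁) = β₁ τ₁`, the node fluxes `v*`, `A*` satisfy the two decoupled
single-element boundary identities used in the optimal convergence proof. -/
theorem decoupled_flux_identities_vA
    (α₁ β₁ τ₁ : ℝ) (h : α₁ * (1 - α₁) = β₁ * τ₁) :
    ∀ vm vp Am Ap : ℝ,
      let vs := α₁ * vm + (1 - α₁) * vp + β₁ * (Am - Ap)
      let As := (1 - α₁) * Am + α₁ * Ap + τ₁ * (vm - vp)
      (α₁ + τ₁) * vs + (1 - α₁ + β₁) * As = (α₁ + τ₁) * vm + (1 - α₁ + β₁) * Am ∧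
      (1 - α₁ + τ₁) * vs - (α₁ + β₁) * As = (1 - α₁ + τ₁) * vp - (α₁ + β₁) * Ap := by
  intro vm vp Am Ap
  refine ⟨by linear_combination (vp + Ap - vm - Am) * h, by linear_combination (vm - vp + Ap - Am) * h⟩
end

section
/- Suppose the flux parameters satisfy α₂ (1 − α₂) = β₂ τ₂. Then for all real traces p⁻, p⁺, B⁻, B⁺ the following two identities hold: (α₂ + τ₂) p* − (1 − α₂ + β₂) B* = (α₂ + τ₂) p⁻ − (1 − α₂ + β₂) B⁻, and (1 − α₂ + τ₂) p* + (α₂ + β₂) B* = (1 − α₂ + τ₂) p⁺ + (α₂ + β₂) B⁺. (These identities show that, under the condition α₂(1−α₂) = β₂τ₂, the vanishing of the node fluxes p* and B* is equivalent to the decoupled single-element boundary equations used in the optimal convergence proof.) -/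
/-- Under `α₂ (1 − α₂) = β₂ τ₂`, the node fluxes `p*`, `B*` satisfy the two decoupled
single-element boundary identities used in the optimal convergence proof. -/
theorem decoupled_flux_identities_pB
    (α₂ β₂ τ₂ : ℝ) (h : α₂ * (1 - α₂) = β₂ * τ₂) :
    ∀ pm pp Bm Bp : ℝ,
      let ps := α₂ * pm + (1 - α₂) * pp - β₂ * (Bm - Bp)
      let Bs := (1 - α₂) * Bm + α₂ * Bp - τ₂ * (pm - pp)
      (α₂ + τ₂) * ps - (1 - α₂ + β₂) * Bs = (α₂ + τ₂) * pm - (1 - α₂ + β₂) * Bm ∧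
      (1 - α₂ + τ₂) * ps + (α₂ + β₂) * Bs = (1 - α₂ + τ₂) * pp + (α₂ + β₂) * Bp := by
  intro pm pp Bm Bp ps Bs
  constructor <;> simp only [ps, Bs]
  · linear_combination (pp - pm + Bm - Bp) * h
  · linear_combination (pm - pp + Bm - Bp) * h
end
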